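/- Let B ∈ M_g(ℂ) be symmetric and suppose that the Hermitian matrix 1 − H is positive semidefinite (i.e. all eigenvalues of H := B·Bᴴ are at most 1). Then for every k with 1 ≤ k ≤ g one has 0 ≤ Φ_k(B) ≤ min(2k, g). -/

import Mathlib

open Finset ComplexOrder

/-- The quantity `Φ_k(B) := 2 ∑_{i=1}^k H_{ii} − ∑_{i,j=1}^k |B_{ij}|²`, where
`H := B Bᴴ`, modelling the function `Φ_k(ω, I_k)` of the paper. -/
noncomputable def Phi (g k : ℕ) (B : Matrix (Fin g) (Fin g) ℂ) : ℝ :=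
  2 * ∑ i ∈ univ.filter (fun i : Fin g => (i : ℕ) < k),
        ((B * B.conjTranspose) i i).re
    - ∑ i ∈ univ.filter (fun i : Fin g => (i : ℕ) < k),
        ∑ j ∈ univ.filter (fun j : Fin g => (j : ℕ) < k), ‖B i j‖ ^ 2

/-! With `f i j := |B_{ij}|²` and `S` the first `k` indices, the row sums of `f` are the
diagonal entries `H_{ii} ≤ 1`, and `Φ_k(B) = ∑_{i ∈ S} H_{ii} + ∑_{i ∈ S, j ∉ S} |B_{ij}|²`.
Both terms are nonnegative, and `Φ_k(B) ≤ 2 ∑_{i ∈ S} H_{ii} ≤ 2|S| ≤ 2k`. Since `B` is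
symmetric, the off-block term is at most `∑_{j ∉ S} H_{jj} ≤ g - |S|`, so `Φ_k(B) ≤ g`. -/

section RowSums

variable {n : Type*} [Fintype n] (f : n → n → ℝ) (S : Finset n)

lemma two_mul_sum_sub_sum_block_eq [DecidableEq n] :
    2 * ∑ i ∈ S, ∑ j, f i j - ∑ i ∈ S, ∑ j ∈ S, f i j
      = ∑ i ∈ S, ∑ j, f i j + ∑ i ∈ S, ∑ j ∈ Sᶜ, f i j := by
  have hsplit : ∑ i ∈ S, ∑ j, f i j
      = ∑ i ∈ S, ∑ j ∈ S, f i j + ∑ i ∈ S, ∑ j ∈ Sᶜ, f i j := by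
    rw [← sum_add_distrib]
    exact sum_congr rfl fun i _ => (sum_add_sum_compl S _).symm
  linarith

variable {f}

lemma sum_sum_le_card (hrow : ∀ i, ∑ j, f i j ≤ 1) : ∑ i ∈ S, ∑ j, f i j ≤ #S := by
  simpa using sum_le_card_nsmul S _ 1 fun i _ => hrow i

lemma two_mul_sum_sub_sum_block_nonneg (hf : ∀ i j, 0 ≤ f i j) :
    0 ≤ 2 * ∑ i ∈ S, ∑ j, f i j - ∑ i ∈ S, ∑ j ∈ S, f i j := by
  classical
  rw [two_mul_sum_sub_sum_block_eq]
  exact add_nonneg (sum_nonneg fun i _ => sum_nonneg fun j _ => hf i j)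
    (sum_nonneg fun i _ => sum_nonneg fun j _ => hf i j)

lemma two_mul_sum_sub_sum_block_le_two_mul_card (hf : ∀ i j, 0 ≤ f i j)
    (hrow : ∀ i, ∑ j, f i j ≤ 1) :
    2 * ∑ i ∈ S, ∑ j, f i j - ∑ i ∈ S, ∑ j ∈ S, f i j ≤ 2 * #S := by
  have hblock : 0 ≤ ∑ i ∈ S, ∑ j ∈ S, f i j :=
    sum_nonneg fun i _ => sum_nonneg fun j _ => hf i j
  linarith [sum_sum_le_card S hrow]

lemma two_mul_sum_sub_sum_block_le_card (hf : ∀ i j, 0 ≤ f i j)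
    (hsymm : ∀ i j, f i j = f j i) (hrow : ∀ i, ∑ j, f i j ≤ 1) :
    2 * ∑ i ∈ S, ∑ j, f i j - ∑ i ∈ S, ∑ j ∈ S, f i j ≤ Fintype.card n := by
  classical
  have hoff : ∑ i ∈ S, ∑ j ∈ Sᶜ, f i j ≤ ∑ j ∈ Sᶜ, ∑ i, f j i := by
    rw [sum_comm]
    gcongr with j
    simp_rw [hsymm _ j]
    exact sum_le_sum_of_subset_of_nonneg (subset_univ S) fun i _ _ => hf j i
  have hcard : (#S : ℝ) + #Sᶜ = Fintype.card n := by exact_mod_cast card_add_card_compl S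
  rw [two_mul_sum_sub_sum_block_eq]
  linarith [sum_sum_le_card S hrow, sum_sum_le_card Sᶜ hrow]

end RowSums

lemma Matrix.re_mul_conjTranspose_apply_self {m n : Type*} [Fintype n]
    (B : Matrix m n ℂ) (i : m) : ((B * B.conjTranspose) i i).re = ∑ j, ‖B i j‖ ^ 2 := by
  simp only [Matrix.mul_apply, Matrix.conjTranspose_apply, Complex.re_sum]
  refine sum_congr rfl fun j _ => ?_
  rw [Complex.star_def, Complex.mul_conj']
  norm_cast

lemma Matrix.PosSemidef.re_apply_le_one_of_one_sub {n : Type*} [Fintype n] [DecidableEq n]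
    {A : Matrix n n ℂ} (hA : (1 - A).PosSemidef) (i : n) : (A i i).re ≤ 1 := by
  have h := (Complex.le_def.mp (hA.diag_nonneg (i := i))).1
  simp only [Matrix.sub_apply, Matrix.one_apply_eq, Complex.sub_re, Complex.one_re,
    Complex.zero_re] at h
  linarith

theorem Phi_nonneg_and_le_min_general (g : ℕ)
    (B : Matrix (Fin g) (Fin g) ℂ) (hB : B.IsSymm)
    (hH : (1 - B * B.conjTranspose).PosSemidef)
    (k : ℕ) :
    0 ≤ Phi g k B ∧ Phi g k B ≤ min (2 * (k : ℝ)) (g : ℝ) := by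
  set S := univ.filter (fun i : Fin g => (i : ℕ) < k)
  have hPhi : Phi g k B = 2 * ∑ i ∈ S, ∑ j, ‖B i j‖ ^ 2 - ∑ i ∈ S, ∑ j ∈ S, ‖B i j‖ ^ 2 := by
    simp only [Phi, Matrix.re_mul_conjTranspose_apply_self, S]
  have hf : ∀ i j, 0 ≤ ‖B i j‖ ^ 2 := fun i j => by positivity
  have hsymm : ∀ i j, ‖B i j‖ ^ 2 = ‖B j i‖ ^ 2 := fun i j => by rw [hB.apply]
  have hrow : ∀ i, ∑ j, ‖B i j‖ ^ 2 ≤ 1 := fun i =>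
    Matrix.re_mul_conjTranspose_apply_self B i ▸ hH.re_apply_le_one_of_one_sub i
  have hS : (#S : ℝ) ≤ k := by
    exact_mod_cast (Fin.card_filter_val_lt (n := g) (m := k)).trans_le (min_le_right g k)
  refine ⟨hPhi ▸ two_mul_sum_sub_sum_block_nonneg S hf, le_min ?_ ?_⟩
  · linarith [hPhi ▸ two_mul_sum_sub_sum_block_le_two_mul_card S hf hrow]
  · simpa [hPhi] using two_mul_sum_sub_sum_block_le_card S hf hsymm hrow

/-- Let `B ∈ M_g(ℂ)` be symmetric such that `1 − H` is positive
semidefinite, where `H := B Bᴴ` (i.e. all eigenvalues of `H` are at most `1`).  Then for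
every `1 ≤ k ≤ g` one has `0 ≤ Φ_k(B) ≤ min(2k, g)`. -/
theorem Phi_nonneg_and_le_min (g : ℕ) (hg : 1 ≤ g)
    (B : Matrix (Fin g) (Fin g) ℂ) (hB : B.IsSymm)
    (hH : (1 - B * B.conjTranspose).PosSemidef)
    (k : ℕ) (hk1 : 1 ≤ k) (hkg : k ≤ g) :
    0 ≤ Phi g k B ∧ Phi g k B ≤ min (2 * (k : ℝ)) (g : ℝ) :=
  Phi_nonneg_and_le_min_general g B hB hH k
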